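/- With tiles T ⊊ G, T' = T + x ≠ T, C↓ = T' \ T, C↑ = T \ T', A = T ∪ T': let d ≥ 1 and let 0 ≤ i_1 < i_2 < ⋯ < i_m ≤ d be distinct integers. Then the m-fold dagger lift (A^d \ (C_{i_1,d} ∪ ⋯ ∪ C_{i_m,d}))^{†m} is a hole in A^{d+m}, i.e. its complement in A^{d+m} is T-tilable. -/

import Mathlib

def IsCopy {G : Type*} [AddCommGroup G] {d : ℕ} (T : Set G)
    (S : Set (Fin d → G)) : Prop :=
  ∃ (j : Fin d) (y : Fin d → G),
    S = {z | ∃ t ∈ T, z = Function.update y j (y j + t)}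

def Tilable {G : Type*} [AddCommGroup G] {d : ℕ} (T : Set G)
    (X : Set (Fin d → G)) : Prop :=
  ∃ P : Set (Set (Fin d → G)),
    (∀ S ∈ P, IsCopy T S) ∧ P.PairwiseDisjoint id ∧ ⋃₀ P = X

def Cset {G : Type*} (Cdown Cup : Set G) {d : ℕ} (io : Option (Fin d)) :
    Set (Fin d → G) :=
  {z | ∀ j : Fin d, z j ∈ if (some j = io) then Cup else Cdown}

def dagger {G : Type*} (Cdown Cup : Set G) {d : ℕ} (X : Set (Fin d → G)) :
    Set (Fin (d + 1) → G) :=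
  {z | (Fin.init z ∈ X ∧ z (Fin.last d) ∈ Cdown) ∨
       ((∀ j : Fin d, z j.castSucc ∈ Cdown) ∧ z (Fin.last d) ∈ Cup)}

/-- `m` iterations of the dagger lift. -/
def daggerIter {G : Type*} (Cdown Cup : Set G) {d : ℕ} :
    (m : ℕ) → Set (Fin d → G) → Set (Fin (d + m) → G)
  | 0, X => X
  | m + 1, X => dagger Cdown Cup (daggerIter Cdown Cup m X)

/-!
Induction on `m`, adding one index at a time. Lifting commutes with removing a `C`-set,
`(X \ C_{i,n})^† = X^† \ C_{i,n+1}`, so it suffices to show: if `X` is a hole in `A^n`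
containing `C_{i,n}`, then `(X \ C_{i,n})^†` is a hole in `A^{n+1}`. The complement of
`(X \ C_{i,n})^†` is the disjoint union of `(A^n \ X) × C↓`, tiled by a tiling of `A^n \ X`,
and the complement of `(A^n \ C_{i,n})^†`. The latter is tiled explicitly, using that
`A = T ⊔ C↓` and that `T' = (T \ C↑) ⊔ C↓` is a translate of `T`.
-/

open Function Set
open scoped Pointwise

section Tiling

variable {G : Type*} [AddCommGroup G] {T : Set G} {n : ℕ}

theorem Tilable.empty (T : Set G) : Tilable T (∅ : Set (Fin n → G)) :=
  ⟨∅, by simp, by simp, by simp⟩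

theorem Tilable.union {X X' : Set (Fin n → G)} (hX : Tilable T X) (hX' : Tilable T X')
    (h : Disjoint X X') : Tilable T (X ∪ X') := by
  obtain ⟨P, hPcopy, hPdisj, rfl⟩ := hX
  obtain ⟨Q, hQcopy, hQdisj, rfl⟩ := hX'
  refine ⟨P ∪ Q, fun S hS => hS.elim (hPcopy S) (hQcopy S), hPdisj.union hQdisj ?_,
    sUnion_union P Q⟩
  exact fun S hS S' hS' _ => h.mono (subset_sUnion_of_mem hS) (subset_sUnion_of_mem hS')

theorem mem_copy_iff {y z : Fin n → G} {j : Fin n} :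
    z ∈ {z | ∃ t ∈ T, z = update y j (y j + t)} ↔
      z j ∈ y j +ᵥ T ∧ ∀ l ≠ j, z l = y l := by
  simp only [mem_ofPred_eq, eq_update_iff, mem_vadd_set, vadd_eq_add]
  constructor
  · rintro ⟨t, ht, hj, hoff⟩
    exact ⟨⟨t, ht, hj.symm⟩, hoff⟩
  · rintro ⟨⟨t, ht, hj⟩, hoff⟩
    exact ⟨t, ht, hj.symm, hoff⟩

theorem tilable_setOf_and_mem_vadd (j : Fin n) (c : G) {Q : (Fin n → G) → Prop}
    (hQ : ∀ z w, (∀ l ≠ j, z l = w l) → Q z → Q w) :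
    Tilable T {z | Q z ∧ z j ∈ c +ᵥ T} := by
  refine ⟨{S | ∃ y, Q y ∧ y j = c ∧ S = {z | ∃ t ∈ T, z = update y j (y j + t)}},
    ?_, ?_, ?_⟩
  · rintro S ⟨y, -, -, rfl⟩
    exact ⟨j, y, rfl⟩
  · rintro S ⟨y, -, hy, rfl⟩ S' ⟨y', -, hy', rfl⟩ hne
    refine disjoint_left.2 fun z hz hz' => hne ?_
    rw [id, mem_copy_iff] at hz hz'
    have base : ∀ w : Fin n → G, w j = c → (∀ l ≠ j, z l = w l) → w = update z j c :=
      fun w hw hoff => eq_update_iff.2 ⟨hw, fun l hl => (hoff l hl).symm⟩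
    rw [base y hy hz.2, base y' hy' hz'.2]
  · ext z
    simp only [mem_sUnion, mem_ofPred_eq]
    constructor
    · rintro ⟨S, ⟨y, hQy, hy, rfl⟩, hz⟩
      rw [mem_copy_iff, hy] at hz
      exact ⟨hQ y z (fun l hl => (hz.2 l hl).symm) hQy, hz.1⟩
    · rintro ⟨hQz, hz⟩
      have hoff : ∀ l ≠ j, z l = update z j c l := fun l hl => (update_of_ne hl c z).symm
      refine ⟨_, ⟨update z j c, hQ z _ hoff hQz, update_self j c z, rfl⟩, ?_⟩
      rw [mem_copy_iff, update_self]
      exact ⟨hz, hoff⟩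

end Tiling

section Grid

variable {G : Type*} {n : ℕ}

/-- `A^n`. -/
def cube (A : Set G) (n : ℕ) : Set (Fin n → G) := {z | ∀ j, z j ∈ A}

/-- The paper's `P × F`, with `F` in the last coordinate. -/
def snocProd (P : Set (Fin n → G)) (F : Set G) : Set (Fin (n + 1) → G) :=
  {z | Fin.init z ∈ P ∧ z (Fin.last n) ∈ F}

theorem cube_succ (A : Set G) : cube A (n + 1) = snocProd (cube A n) A :=
  ext fun _ => Fin.forall_fin_succ'

theorem snocProd_mono {P P' : Set (Fin n → G)} {F F' : Set G} (hP : P ⊆ P') (hF : F ⊆ F') :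
    snocProd P F ⊆ snocProd P' F' :=
  fun _ hz => ⟨hP hz.1, hF hz.2⟩

end Grid

theorem Tilable.snocProd {G : Type*} [AddCommGroup G] {T : Set G} {n : ℕ}
    {Y : Set (Fin n → G)} (hY : Tilable T Y) (F : Set G) : Tilable T (snocProd Y F) := by
  obtain ⟨P, hPcopy, hPdisj, rfl⟩ := hY
  refine ⟨{S' | ∃ S ∈ P, ∃ c ∈ F, S' = _root_.snocProd S {c}}, ?_, ?_, ?_⟩
  · rintro S' ⟨S, hS, c, -, rfl⟩
    obtain ⟨j, y, rfl⟩ := hPcopy S hS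
    refine ⟨j.castSucc, Fin.snoc y c, ext fun z => ?_⟩
    simp only [_root_.snocProd, mem_ofPred_eq, mem_singleton_iff, Fin.snoc_castSucc,
      ← Fin.snoc_update]
    constructor
    · rintro ⟨⟨t, ht, hinit⟩, hlast⟩
      exact ⟨t, ht, by rw [← hinit, ← hlast, Fin.snoc_init_self]⟩
    · rintro ⟨t, ht, rfl⟩
      simp only [Fin.init_snoc, Fin.snoc_last, and_true]
      exact ⟨t, ht, rfl⟩
  · rintro S' ⟨S, hS, c, -, rfl⟩ S'' ⟨S₂, hS₂, c₂, -, rfl⟩ hne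
    refine disjoint_left.2 fun z hz hz₂ => ?_
    have hc : c = c₂ := hz.2.symm.trans hz₂.2
    have hSS : S ≠ S₂ := fun h => hne (by rw [h, hc])
    exact (hPdisj hS hS₂ hSS).ne_of_mem hz.1 hz₂.1 rfl
  · ext z
    simp only [mem_sUnion, mem_ofPred_eq, _root_.snocProd]
    constructor
    · rintro ⟨_, ⟨S, hS, c, hc, rfl⟩, hinit, rfl⟩
      exact ⟨⟨S, hS, hinit⟩, hc⟩
    · rintro ⟨⟨S, hS, hinit⟩, hlast⟩
      exact ⟨_, ⟨S, hS, _, hlast, rfl⟩, hinit, rfl⟩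

section Cset

variable {G : Type*} {Cdown Cup : Set G} {n : ℕ}

theorem mem_Cset_none {z : Fin n → G} : z ∈ Cset Cdown Cup none ↔ ∀ j, z j ∈ Cdown := by
  simp [Cset]

theorem mem_Cset_some {z : Fin n → G} {i : Fin n} :
    z ∈ Cset Cdown Cup (some i) ↔ z i ∈ Cup ∧ ∀ j ≠ i, z j ∈ Cdown := by
  simp only [Cset, mem_ofPred_eq, Option.some.injEq]
  refine ⟨fun h => ⟨by simpa using h i, fun j hj => by simpa [hj] using h j⟩, fun h j => ?_⟩
  split_ifs with hj
  exacts [hj ▸ h.1, h.2 j hj]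

theorem Cset_map_castSucc (io : Option (Fin n)) :
    Cset Cdown Cup (io.map Fin.castSucc) = snocProd (Cset Cdown Cup io) Cdown := by
  ext z
  cases io with
  | none => simp [mem_Cset_none, snocProd, Fin.forall_fin_succ', Fin.init]
  | some i =>
    simp [mem_Cset_some, snocProd, Fin.forall_fin_succ', Fin.init, (Fin.castSucc_lt_last i).ne',
      and_assoc]

theorem Cset_subset_cube {A : Set G} (hDA : Cdown ⊆ A) (hUA : Cup ⊆ A) (io : Option (Fin n)) :
    Cset Cdown Cup io ⊆ cube A n := fun z hz j => by
  have := hz j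
  split_ifs at this
  exacts [hUA this, hDA this]

theorem Cset_disjoint (hUD : Disjoint Cup Cdown) {io io' : Option (Fin n)} (hne : io ≠ io') :
    Disjoint (Cset Cdown Cup io) (Cset Cdown Cup io') := by
  refine disjoint_left.2 fun z hz hz' => ?_
  rcases io with _ | i <;> rcases io' with _ | i'
  · exact hne rfl
  · exact hUD.ne_of_mem (mem_Cset_some.1 hz').1 (mem_Cset_none.1 hz i') rfl
  · exact hUD.ne_of_mem (mem_Cset_some.1 hz).1 (mem_Cset_none.1 hz' i) rfl
  · have hii : i ≠ i' := fun h => hne (congrArg some h)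
    exact hUD.ne_of_mem (mem_Cset_some.1 hz).1 ((mem_Cset_some.1 hz').2 i hii) rfl

theorem dagger_eq (X : Set (Fin n → G)) :
    dagger Cdown Cup X = snocProd X Cdown ∪ snocProd (Cset Cdown Cup none) Cup := by
  ext z
  simp [dagger, snocProd, mem_Cset_none, Fin.init]

theorem dagger_diff_Cset (hUD : Disjoint Cup Cdown) (X : Set (Fin n → G)) (io : Option (Fin n)) :
    dagger Cdown Cup (X \ Cset Cdown Cup io) =
      dagger Cdown Cup X \ Cset Cdown Cup (io.map Fin.castSucc) := by
  ext z
  simp only [dagger_eq, Cset_map_castSucc, snocProd, mem_union, mem_sdiff, mem_ofPred_eq]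
  have := @disjoint_left.1 hUD (z (Fin.last n))
  tauto

theorem daggerIter_diff_Cset (hUD : Disjoint Cup Cdown) (X : Set (Fin n → G))
    (io : Option (Fin n)) (m : ℕ) :
    daggerIter Cdown Cup m (X \ Cset Cdown Cup io) =
      daggerIter Cdown Cup m X \ Cset Cdown Cup (io.map (Fin.castAdd m)) := by
  induction m with
  | zero => cases io <;> rfl
  | succ m ih => rw [daggerIter, ih, dagger_diff_Cset hUD, Option.map_map]; rfl

theorem Cset_subset_daggerIter {X : Set (Fin n → G)} {io : Option (Fin n)}
    (h : Cset Cdown Cup io ⊆ X) (m : ℕ) :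
    Cset Cdown Cup (io.map (Fin.castAdd m)) ⊆ daggerIter Cdown Cup m X := by
  induction m with
  | zero => cases io <;> exact h
  | succ m ih =>
    have hlift : io.map (Fin.castAdd (m + 1)) = (io.map (Fin.castAdd m)).map Fin.castSucc := by
      rw [Option.map_map]; rfl
    rw [daggerIter, dagger_eq, hlift, Cset_map_castSucc]
    exact (snocProd_mono ih subset_rfl).trans subset_union_left

end Cset

section Hole

variable {G : Type*} [AddCommGroup G] {T Cdown Cup : Set G} {n : ℕ}

def IsHole (T A : Set G) (X : Set (Fin n → G)) : Prop := Tilable T (cube A n \ X)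

theorem tilable_snocProd_vadd (P : Set (Fin n → G)) (c : G) :
    Tilable T (snocProd P (c +ᵥ T)) :=
  tilable_setOf_and_mem_vadd (Fin.last n) c fun z w h hz => by
    have : Fin.init z = Fin.init w := funext fun j => h _ (Fin.castSucc_lt_last j).ne
    exact this ▸ hz

theorem tilable_setOf_castSucc_mem_vadd (E F : Set G) (i : Fin n) (c : G) :
    Tilable T {z : Fin (n + 1) → G |
      ((∀ j ≠ i, z j.castSucc ∈ E) ∧ z (Fin.last n) ∈ F) ∧ z i.castSucc ∈ c +ᵥ T} :=
  tilable_setOf_and_mem_vadd i.castSucc c fun _ _ h hz =>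
    ⟨fun j hj => h _ (Fin.castSucc_injective n |>.ne hj) ▸ hz.1 j hj,
      h _ (Fin.castSucc_lt_last i).ne' ▸ hz.2⟩

theorem IsHole.dagger_diff {A : Set G} (hDA : Cdown ⊆ A) (hUD : Disjoint Cup Cdown)
    {X C : Set (Fin n → G)} (hX : IsHole T A X) (hCX : C ⊆ X)
    (hC : IsHole T A (dagger Cdown Cup (cube A n \ C))) :
    IsHole T A (dagger Cdown Cup (X \ C)) := by
  have hsplit : cube A (n + 1) \ dagger Cdown Cup (X \ C) =
      (cube A (n + 1) \ dagger Cdown Cup (cube A n \ C)) ∪ snocProd (cube A n \ X) Cdown := by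
    ext z
    simp only [cube_succ, dagger_eq, snocProd, mem_union, mem_sdiff, mem_ofPred_eq]
    have := @disjoint_left.1 hUD (z (Fin.last n))
    have := @hCX (Fin.init z)
    have := @hDA (z (Fin.last n))
    tauto
  have hdisj : Disjoint (cube A (n + 1) \ dagger Cdown Cup (cube A n \ C))
      (snocProd (cube A n \ X) Cdown) := by
    refine disjoint_sdiff_left.mono_right ?_
    rw [dagger_eq]
    exact (snocProd_mono (sdiff_subset_sdiff_right hCX) subset_rfl).trans subset_union_left
  rw [IsHole, hsplit]
  exact hC.union (hX.snocProd Cdown) hdisj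

theorem isHole_dagger_cube_diff_Cset_none (hUT : Cup ⊆ T) (hTD : Disjoint T Cdown) {x : G}
    (hshift : x +ᵥ T = T \ Cup ∪ Cdown) :
    IsHole T (T ∪ Cdown) (dagger Cdown Cup (cube (T ∪ Cdown) n \ Cset Cdown Cup none)) := by
  set K : Set (Fin n → G) := Cset Cdown Cup none
  have hsplit : cube (T ∪ Cdown) (n + 1) \ dagger Cdown Cup (cube (T ∪ Cdown) n \ K) =
      snocProd (cube (T ∪ Cdown) n \ K) T ∪ snocProd K (x +ᵥ T) := by
    ext z
    simp only [hshift, cube_succ, dagger_eq, snocProd, mem_union, mem_sdiff, mem_ofPred_eq]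
    have : Fin.init z ∈ K → Fin.init z ∈ cube (T ∪ Cdown) n :=
      fun h => Cset_subset_cube subset_union_right (hUT.trans subset_union_left) none h
    have := @hUT (z (Fin.last n))
    have := @disjoint_left.1 hTD (z (Fin.last n))
    tauto
  have hT : Tilable T (snocProd (cube (T ∪ Cdown) n \ K) T) := by
    simpa only [zero_vadd] using tilable_snocProd_vadd (T := T) (cube (T ∪ Cdown) n \ K) 0
  rw [IsHole, hsplit]
  refine hT.union (tilable_snocProd_vadd K x) (disjoint_left.2 fun z hz hz' => hz.1.2 hz'.1)

/-- Let `D` be the slab where all coordinates except `i` and the last lie in `C↓`. Off `D` the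
complement is `(A^n \ D) × T`; on `D`, in the coordinates `(i, last)`, it is
`T × T ∪ C↓ × (T \ C↑) ∪ C↑ × C↓`, which is cut into `T × C↑` and `T' × (T \ C↑)` (copies in
direction `i`) and `C↑ × T'` (copies in the last direction). -/
theorem isHole_dagger_cube_diff_Cset_some (hUT : Cup ⊆ T) (hTD : Disjoint T Cdown) {x : G}
    (hshift : x +ᵥ T = T \ Cup ∪ Cdown) (i : Fin n) :
    IsHole T (T ∪ Cdown) (dagger Cdown Cup (cube (T ∪ Cdown) n \ Cset Cdown Cup (some i))) := by
  set D : Set (Fin n → G) := {w | ∀ j ≠ i, w j ∈ Cdown}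
  set S₂ : Set (Fin (n + 1) → G) :=
    {z | ((∀ j ≠ i, z j.castSucc ∈ Cdown) ∧ z (Fin.last n) ∈ Cup) ∧ z i.castSucc ∈ T}
  set S₄ : Set (Fin (n + 1) → G) :=
    {z | ((∀ j ≠ i, z j.castSucc ∈ Cdown) ∧ z (Fin.last n) ∈ T \ Cup) ∧
      z i.castSucc ∈ x +ᵥ T}
  have facts : ∀ a : G, (a ∈ Cup → a ∈ T) ∧ (a ∈ T → a ∉ Cdown) :=
    fun a => ⟨@hUT a, @disjoint_left.1 hTD a⟩
  have hK : ∀ w : Fin n → G, (∀ j, w j ∈ Cdown) ↔ w i ∈ Cdown ∧ w ∈ D :=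
    fun w => (and_forall_ne i).symm
  have hcube : ∀ w ∈ D, w ∈ cube (T ∪ Cdown) n ↔ w i ∈ T ∨ w i ∈ Cdown :=
    fun w hw => ⟨fun h => h i, fun h j => if hj : j = i then hj ▸ h else Or.inr (hw j hj)⟩
  have hsplit : cube (T ∪ Cdown) (n + 1) \
        dagger Cdown Cup (cube (T ∪ Cdown) n \ Cset Cdown Cup (some i)) =
      snocProd (cube (T ∪ Cdown) n \ D) T ∪
        (S₂ ∪ (snocProd (Cset Cdown Cup (some i)) (x +ᵥ T) ∪ S₄)) := by
    ext z
    have hKz := hK (Fin.init z)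
    have hcubez := hcube (Fin.init z)
    have := facts (z (Fin.last n))
    have := facts (z i.castSucc)
    simp only [hshift, cube_succ, dagger_eq, snocProd, mem_union, mem_sdiff, mem_ofPred_eq,
      mem_Cset_some, mem_Cset_none, S₂, S₄, D, Fin.init] at hKz hcubez ⊢
    grind
  have h₁ : Tilable T (snocProd (cube (T ∪ Cdown) n \ D) T) := by
    simpa only [zero_vadd] using tilable_snocProd_vadd (T := T) (cube (T ∪ Cdown) n \ D) 0
  have h₂ : Tilable T S₂ := by
    simpa only [zero_vadd] using tilable_setOf_castSucc_mem_vadd (T := T) Cdown Cup i 0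
  have h₃ := tilable_snocProd_vadd (T := T) (Cset Cdown Cup (some i)) x
  have h₄ : Tilable T S₄ := tilable_setOf_castSucc_mem_vadd Cdown (T \ Cup) i x
  rw [IsHole, hsplit]
  refine h₁.union (h₂.union (h₃.union h₄ ?_) ?_) ?_ <;>
  · refine disjoint_left.2 fun z hz hz' => ?_
    have := facts (z (Fin.last n))
    have := facts (z i.castSucc)
    simp only [hshift, snocProd, mem_union, mem_sdiff, mem_ofPred_eq, mem_Cset_some, S₂, S₄, D,
      Fin.init] at hz hz'
    grind

theorem isHole_dagger_cube_diff_Cset (hUT : Cup ⊆ T) (hTD : Disjoint T Cdown) {x : G}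
    (hshift : x +ᵥ T = T \ Cup ∪ Cdown) (io : Option (Fin n)) :
    IsHole T (T ∪ Cdown) (dagger Cdown Cup (cube (T ∪ Cdown) n \ Cset Cdown Cup io)) := by
  cases io with
  | none => exact isHole_dagger_cube_diff_Cset_none hUT hTD hshift
  | some i => exact isHole_dagger_cube_diff_Cset_some hUT hTD hshift i

theorem isHole_daggerIter_cube_diff_biUnion_Cset (hUT : Cup ⊆ T) (hTD : Disjoint T Cdown)
    {x : G} (hshift : x +ᵥ T = T \ Cup ∪ Cdown) {d : ℕ} (I : Finset (Option (Fin d))) :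
    IsHole T (T ∪ Cdown)
      (daggerIter Cdown Cup I.card (cube (T ∪ Cdown) d \ ⋃ io ∈ I, Cset Cdown Cup io)) := by
  induction I using Finset.induction_on with
  | empty =>
    change Tilable T (cube _ d \ (cube _ d \ _))
    simpa using Tilable.empty T
  | insert io I hio ih =>
    have hUD : Disjoint Cup Cdown := hTD.mono_left hUT
    have hCX : Cset Cdown Cup io ⊆ cube (T ∪ Cdown) d \ ⋃ io' ∈ I, Cset Cdown Cup io' :=
      subset_sdiff.2 ⟨Cset_subset_cube subset_union_right (hUT.trans subset_union_left) io,
        disjoint_iUnion₂_right.2 fun _ hio' =>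
          Cset_disjoint hUD (ne_of_mem_of_not_mem hio' hio).symm⟩
    rw [Finset.card_insert_of_notMem hio, Finset.set_biUnion_insert, ← sdiff_sdiff,
      sdiff_sdiff_comm, daggerIter, daggerIter_diff_Cset hUD]
    exact ih.dagger_diff subset_union_right hUD (Cset_subset_daggerIter hCX _)
      (isHole_dagger_cube_diff_Cset hUT hTD hshift _)

end Hole

theorem mCsets_general {G : Type*} [AddCommGroup G] (T : Set G)
    (x : G)
    (A Cdown Cup : Set G)
    (hA : A = T ∪ (fun t => t + x) '' T)
    (hCdown : Cdown = ((fun t => t + x) '' T) \ T)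
    (hCup : Cup = T \ ((fun t => t + x) '' T))
    (d : ℕ) (m : ℕ) (I : Finset (Option (Fin d))) (hI : I.card = m) :
    Tilable T
      ({z : Fin (d + m) → G | ∀ j, z j ∈ A} \
        daggerIter Cdown Cup m
          ({z : Fin d → G | ∀ j, z j ∈ A} \ ⋃ io ∈ I, Cset Cdown Cup io)) := by
  have hshift : x +ᵥ T = T \ Cup ∪ Cdown := by
    rw [hCup, hCdown, sdiff_sdiff_right_self, inter_comm, inter_union_sdiff, ← image_vadd]
    simp only [vadd_eq_add, add_comm]
  have hA' : A = T ∪ Cdown := by rw [hA, hCdown, union_sdiff_self]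
  subst hA' hI
  exact isHole_daggerIter_cube_diff_biUnion_Cset (hCup ▸ sdiff_subset)
    (hCdown ▸ disjoint_sdiff_right) hshift I

/-- for distinct indices `i₁, …, i_m ∈ {0,…,d}`, the `m`-fold
dagger lift of `A^d \ (C_{i₁,d} ∪ ⋯ ∪ C_{i_m,d})` is a hole in `A^{d+m}`. -/
theorem mCsets {G : Type*} [AddCommGroup G] (T : Set G)
    (hTfin : T.Finite) (hTne : T.Nonempty) (hTprop : T ≠ Set.univ)
    (x : G) (hx : (fun t => t + x) '' T ≠ T)
    (A Cdown Cup : Set G)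
    (hA : A = T ∪ (fun t => t + x) '' T)
    (hCdown : Cdown = ((fun t => t + x) '' T) \ T)
    (hCup : Cup = T \ ((fun t => t + x) '' T))
    (d : ℕ) (hd : 1 ≤ d) (m : ℕ) (I : Finset (Option (Fin d))) (hI : I.card = m) :
    Tilable T
      ({z : Fin (d + m) → G | ∀ j, z j ∈ A} \
        daggerIter Cdown Cup m
          ({z : Fin d → G | ∀ j, z j ∈ A} \ ⋃ io ∈ I, Cset Cdown Cup io)) :=
  mCsets_general T x A Cdown Cup hA hCdown hCup d m I hI
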